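/- arXiv:2605.04944 — 2 statements merged into one kernel-verified Lean document; each statement's English description precedes it below -/
import Mathlib

section
/- Let A be a square matrix over ℂ satisfying A³ = -4A. Then for all real t, exp(tA) = I + (sin(2t)/2)·A + ((1 - cos(2t))/4)·A². -/
/-!
Since `A ^ 3 = -ω ^ 2 • A`, every odd power of `A` is a scalar multiple of `A` and every even
positive power a scalar multiple of `A ^ 2`. Splitting the exponential series of `t • A` into even
and odd terms therefore leaves the power series of `sin (ω t) / ω` in front of `A`, and that of
`(1 - cos (ω t)) / ω ^ 2` (the cosine series without its constant term) in front of `A ^ 2`.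
-/

open Matrix NormedSpace Nat

section PowThree

variable {R 𝔸 : Type*} [CommSemiring R] [Semiring 𝔸] [Algebra R 𝔸]

theorem pow_two_mul_add_one_of_pow_three_eq_smul {c : R} {A : 𝔸} (hA : A ^ 3 = c • A) (k : ℕ) :
    A ^ (2 * k + 1) = c ^ k • A := by
  induction k with
  | zero => simp
  | succ k ih =>
    rw [show 2 * (k + 1) + 1 = 2 + (2 * k + 1) by ring, pow_add, ih, mul_smul_comm,
      ← pow_succ, hA, smul_smul, ← pow_succ]

theorem pow_two_mul_add_two_of_pow_three_eq_smul {c : R} {A : 𝔸} (hA : A ^ 3 = c • A) (k : ℕ) :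
    A ^ (2 * k + 2) = c ^ k • A ^ 2 := by
  rw [pow_succ, pow_two_mul_add_one_of_pow_three_eq_smul hA, smul_mul_assoc, ← sq]

end PowThree

theorem Complex.hasSum_sin_mul_div {ω : ℂ} (hω : ω ≠ 0) (t : ℂ) :
    HasSum (fun k : ℕ => (-ω ^ 2) ^ k * t ^ (2 * k + 1) / (2 * k + 1)!)
      (Complex.sin (ω * t) / ω) := by
  convert! (Complex.hasSum_sin (ω * t)).div_const ω using 1
  ext k
  rw [neg_pow, mul_pow, ← pow_mul]
  field_simp
  ring

theorem Complex.hasSum_one_sub_cos_mul_div {ω : ℂ} (hω : ω ≠ 0) (t : ℂ) :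
    HasSum (fun k : ℕ => (-ω ^ 2) ^ k * t ^ (2 * k + 2) / (2 * k + 2)!)
      ((1 - Complex.cos (ω * t)) / ω ^ 2) := by
  convert! ((hasSum_nat_add_iff' 1).mpr (Complex.hasSum_cos (ω * t))).div_const (-ω ^ 2) using 1
  · ext k
    rw [neg_pow, mul_pow, ← pow_mul, show 2 * (k + 1) = 2 * k + 2 by ring]
    field_simp
    ring
  · simp only [Finset.range_one, Finset.sum_singleton]
    field_simp
    ring

theorem exp_smul_eq_of_pow_three_eq {𝔸 : Type*} [Ring 𝔸] [Algebra ℂ 𝔸] [TopologicalSpace 𝔸]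
    [IsTopologicalRing 𝔸] [ContinuousSMul ℂ 𝔸] [T2Space 𝔸]
    {ω : ℂ} (hω : ω ≠ 0) {A : 𝔸} (hA : A ^ 3 = (-ω ^ 2) • A) (t : ℂ) :
    exp (t • A) = 1 + (Complex.sin (ω * t) / ω) • A
      + ((1 - Complex.cos (ω * t)) / ω ^ 2) • A ^ 2 := by
  have hterm (m : ℕ) : (m ! : ℂ)⁻¹ • (t • A) ^ m = (t ^ m / m !) • A ^ m := by
    rw [smul_pow, smul_smul, inv_mul_eq_div]
  have hodd : HasSum (fun k : ℕ => (t ^ (2 * k + 1) / (2 * k + 1)! : ℂ) • A ^ (2 * k + 1))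
      ((Complex.sin (ω * t) / ω) • A) := by
    convert! (Complex.hasSum_sin_mul_div hω t).smul_const A using 1
    ext k
    rw [pow_two_mul_add_one_of_pow_three_eq_smul hA, smul_smul]
    ring_nf
  have htail : HasSum
      (fun k : ℕ => (t ^ (2 * (k + 1)) / (2 * (k + 1))! : ℂ) • A ^ (2 * (k + 1)))
      (((1 - Complex.cos (ω * t)) / ω ^ 2) • A ^ 2) := by
    convert! (Complex.hasSum_one_sub_cos_mul_div hω t).smul_const (A ^ 2) using 1
    ext k
    rw [mul_add_one, pow_two_mul_add_two_of_pow_three_eq_smul hA, smul_smul]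
    ring_nf
  have heven := HasSum.zero_add (f := fun k : ℕ => (t ^ (2 * k) / (2 * k)! : ℂ) • A ^ (2 * k)) htail
  simp only [mul_zero, pow_zero, Nat.factorial_zero, Nat.cast_one, div_one, one_smul] at heven
  have hsum := HasSum.even_add_odd (f := fun m : ℕ => (t ^ m / m ! : ℂ) • A ^ m) heven hodd
  rw [exp_eq_tsum ℂ]
  dsimp only
  rw [tsum_congr hterm, hsum.tsum_eq]
  abel

theorem stmt2 {n : ℕ} (A : Matrix (Fin n) (Fin n) ℂ)
    (hA : A ^ 3 = (-4 : ℂ) • A) :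
    ∀ t : ℝ, NormedSpace.exp ((t : ℂ) • A) =
      (1 : Matrix (Fin n) (Fin n) ℂ)
        + ((Real.sin (2 * t) / 2 : ℝ) : ℂ) • A
        + (((1 - Real.cos (2 * t)) / 4 : ℝ) : ℂ) • A ^ 2 := by
  intro t
  have hA' : A ^ 3 = (-(2 : ℂ) ^ 2) • A := by norm_num [hA]
  rw [exp_smul_eq_of_pow_three_eq two_ne_zero hA' t]
  push_cast
  norm_num
end

section
/- Let k and p be nonzero real numbers and let A be the 3×3 real matrix with nonzero entries A₁₂ = -2/k, A₂₁ = k, A₂₃ = -2/p, A₃₂ = p. Then for every real t, exp(tA) equals the matrix with rows (cos²t, -(1/k)sin(2t), (2/(kp))sin²t), ((k/2)sin(2t), cos(2t), -(1/p)sin(2t)), ((kp/2)sin²t, (p/2)sin(2t), cos²t). -/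
/-!
If `a³ = -ω² a` in a real Banach algebra, then
`F t = 1 + (sin ωt / ω) a + ((1 - cos ωt) / ω²) a²` satisfies `F' = a F` and `F 0 = 1`,
so `F t = exp (t a)`: the derivative of `exp (-t a) F t` vanishes.
The matrix `A` of the theorem satisfies `A³ = -4 A`, and with `ω = 2` the entries of `F t`
are the stated trigonometric expressions.
-/

open Matrix NormedSpace

namespace NormedSpace

variable {𝔸 : Type*} [NormedRing 𝔸] [NormedAlgebra ℝ 𝔸] [CompleteSpace 𝔸]

theorem eq_exp_smul_of_hasDerivAt {a : 𝔸} {F : ℝ → 𝔸} (hF₀ : F 0 = 1)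
    (hF : ∀ s, HasDerivAt F (a * F s) s) (t : ℝ) : F t = exp (t • a) := by
  have hderiv : ∀ s, HasDerivAt (fun u : ℝ => exp (u • -a) * F u) 0 s := by
    intro s
    refine ((hasDerivAt_exp_smul_const' (-a) s).mul (hF s)).congr_deriv ?_
    rw [← mul_assoc, ← ((Commute.refl a).neg_right.smul_right s).exp_right.eq]
    noncomm_ring
  have hconst : exp (t • -a) * F t = 1 := by
    rw [is_const_of_deriv_eq_zero (fun u => (hderiv u).differentiableAt)
      (fun u => (hderiv u).deriv) t 0]
    simp [hF₀]
  -- `exp` does not depend on the scalar field; a `ℚ`-algebra structure is needed to invert it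
  let := NormedAlgebra.restrictScalars ℚ ℝ 𝔸
  let := invertibleExp (t • a)
  rwa [smul_neg, ← invOf_exp, invOf_mul_eq_iff_eq_mul_left, mul_one] at hconst

theorem exp_smul_eq_of_mul_mul_self_eq {a : 𝔸} {ω : ℝ} (hω : ω ≠ 0)
    (ha : a * a * a = -(ω ^ 2) • a) (t : ℝ) :
    exp (t • a) =
      1 + (Real.sin (ω * t) / ω) • a + ((1 - Real.cos (ω * t)) / ω ^ 2) • (a * a) := by
  refine (eq_exp_smul_of_hasDerivAt
    (F := fun u => 1 + (Real.sin (ω * u) / ω) • a + ((1 - Real.cos (ω * u)) / ω ^ 2) • (a * a))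
    (by simp) (fun s => ?_) t).symm
  have hsin : HasDerivAt (fun u => Real.sin (ω * u) / ω) (Real.cos (ω * s)) s := by
    refine (((Real.hasDerivAt_sin _).comp s ((hasDerivAt_id' s).const_mul ω)).div_const ω
      ).congr_deriv ?_
    field_simp
  have hcos : HasDerivAt (fun u => (1 - Real.cos (ω * u)) / ω ^ 2)
      (Real.sin (ω * s) / ω) s := by
    refine ((((Real.hasDerivAt_cos _).comp s ((hasDerivAt_id' s).const_mul ω)).const_sub 1
      ).div_const (ω ^ 2)).congr_deriv ?_
    field_simp
  refine (((hasDerivAt_const s (1 : 𝔸)).add (hsin.smul_const a)).add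
    (hcos.smul_const (a * a))).congr_deriv ?_
  rw [mul_add, mul_add, mul_one, mul_smul_comm, mul_smul_comm, ← mul_assoc, ha, smul_smul]
  field_simp
  module

end NormedSpace

section

-- `exp` only sees the topology, so any normed-algebra structure on matrices will do
attribute [local instance] Matrix.linftyOpNormedRing Matrix.linftyOpNormedAlgebra

theorem Matrix.exp_smul_eq_of_mul_mul_self_eq {n : Type*} [Fintype n] [DecidableEq n]
    {A : Matrix n n ℝ} {ω : ℝ} (hω : ω ≠ 0) (hA : A * A * A = -(ω ^ 2) • A) (t : ℝ) :
    exp (t • A) =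
      1 + (Real.sin (ω * t) / ω) • A + ((1 - Real.cos (ω * t)) / ω ^ 2) • (A * A) :=
  NormedSpace.exp_smul_eq_of_mul_mul_self_eq hω hA t

end

noncomputable def tridiagMatrix (k p : ℝ) : Matrix (Fin 3) (Fin 3) ℝ :=
  !![0, -2/k, 0; k, 0, -2/p; 0, p, 0]

section

variable {k p : ℝ}

theorem tridiagMatrix_mul_self (hk : k ≠ 0) (hp : p ≠ 0) :
    tridiagMatrix k p * tridiagMatrix k p = !![-2, 0, 4/(k*p); 0, -4, 0; k*p, 0, -2] := by
  rw [tridiagMatrix, mul_fin_three]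
  simp only [mul_zero, zero_add, add_zero, zero_mul, EmbeddingLike.apply_eq_iff_eq, vecCons_inj,
    and_true, true_and]
  field_simp
  norm_num

theorem tridiagMatrix_mul_self_mul_self (hk : k ≠ 0) (hp : p ≠ 0) :
    tridiagMatrix k p * tridiagMatrix k p * tridiagMatrix k p =
      -((2 : ℝ) ^ 2) • tridiagMatrix k p := by
  rw [tridiagMatrix_mul_self hk hp, tridiagMatrix, mul_fin_three, smul_of]
  simp only [mul_zero, zero_mul, add_zero, neg_mul, zero_add, neg_smul, smul_cons, smul_eq_mul,
    smul_empty, neg_cons, neg_zero, neg_empty, EmbeddingLike.apply_eq_iff_eq, vecCons_inj, and_true,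
    true_and, neg_inj, mul_eq_mul_right_iff, div_eq_zero_iff, neg_eq_zero, OfNat.ofNat_ne_zero,
    false_or]
  field_simp
  norm_num

end

theorem stmt5 (k p : ℝ) (hk : k ≠ 0) (hp : p ≠ 0)
    (A : Matrix (Fin 3) (Fin 3) ℝ)
    (hA : A = !![0, -2/k, 0; k, 0, -2/p; 0, p, 0]) :
    ∀ t : ℝ, NormedSpace.exp (t • A) =
      !![Real.cos t ^ 2,          -(1/k) * Real.sin (2*t),  (2/(k*p)) * Real.sin t ^ 2;
         (k/2) * Real.sin (2*t),  Real.cos (2*t),           -(1/p) * Real.sin (2*t);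
         (k*p/2) * Real.sin t ^ 2, (p/2) * Real.sin (2*t),  Real.cos t ^ 2] := by
  intro t
  subst hA
  change exp (t • tridiagMatrix k p) = _
  rw [Matrix.exp_smul_eq_of_mul_mul_self_eq two_ne_zero
    (tridiagMatrix_mul_self_mul_self hk hp), tridiagMatrix_mul_self hk hp, tridiagMatrix]
  ext i j
  fin_cases i <;> fin_cases j <;> simp [Real.cos_two_mul, Real.sin_sq] <;> field_simp <;> ring
end
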